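/- arXiv:2507.20428 — 5 statements merged into one kernel-verified Lean document; each statement's English description precedes it below -/
import Mathlib

section
/- π/4 - 1 = -(1/16) Σ_{k=0}^∞ (1/16^k) [8/((8k+1)(8k+2)) - 4/((8k+3)(8k+4)) - 4/((8k+4)(8k+5)) - 2/((8k+5)(8k+6)) + 1/((8k+7)(8k+8)) + 1/((8k+8)(8k+9))]. -/
open MeasureTheory intervalIntegral Real Set

noncomputable def qpoly (u : ℝ) : ℝ := 8 - 8*u - 4*u^2 + 2*u^4 + 2*u^5 + u^6 - u^8

lemma integral_monomial (n : ℕ) : ∫ u in (0:ℝ)..1, u ^ n = 1 / (n + 1) := by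
  rw [integral_pow]; simp

lemma intint (c : ℝ) (n : ℕ) :
    IntervalIntegrable (fun u : ℝ => c * u ^ n) volume 0 1 :=
  (intervalIntegrable_pow n).const_mul c

lemma integral_qpoly (k : ℕ) :
    ∫ u in (0:ℝ)..1, u ^ (8*k) * qpoly u
      = 8/(8*(k:ℝ)+1) - 8/(8*k+2) - 4/(8*k+3) + 2/(8*k+5) + 2/(8*k+6)
        + 1/(8*k+7) - 1/(8*k+9) := by
  have h : (fun u : ℝ => u ^ (8*k) * qpoly u)
      = fun u : ℝ => ((((((8 * u^(8*k) - 8 * u^(8*k+1)) - 4 * u^(8*k+2))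
          + 2 * u^(8*k+4)) + 2 * u^(8*k+5)) + 1 * u^(8*k+6)) - 1 * u^(8*k+8)) := by
    funext u; simp only [qpoly]; ring
  rw [h, integral_sub (by
        exact ((((((intint 8 _).sub (intint 8 _)).sub (intint 4 _)).add
          (intint 2 _)).add (intint 2 _)).add (intint 1 _)) ) (intint 1 _),
    integral_add (by
        exact (((((intint 8 _).sub (intint 8 _)).sub (intint 4 _)).add
          (intint 2 _)).add (intint 2 _))) (intint 1 _),
    integral_add (by
        exact ((((intint 8 _).sub (intint 8 _)).sub (intint 4 _)).add
          (intint 2 _))) (intint 2 _),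
    integral_add (by
        exact (((intint 8 _).sub (intint 8 _)).sub (intint 4 _))) (intint 2 _),
    integral_sub (by exact ((intint 8 _).sub (intint 8 _))) (intint 4 _),
    integral_sub (intint 8 _) (intint 8 _),
    intervalIntegral.integral_const_mul, intervalIntegral.integral_const_mul, intervalIntegral.integral_const_mul, intervalIntegral.integral_const_mul,
    intervalIntegral.integral_const_mul, intervalIntegral.integral_const_mul, intervalIntegral.integral_const_mul]
  simp only [integral_monomial]
  push_cast
  ring

set_option maxHeartbeats 2000000 in
theorem stmt_7 :
    Real.pi/4 - 1
      = -(1/16) * ∑' k : ℕ, (1 / 16^k) *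
          (8 / ((8*k + 1) * (8*k + 2)) - 4 / ((8*k + 3) * (8*k + 4))
            - 4 / ((8*k + 4) * (8*k + 5)) - 2 / ((8*k + 5) * (8*k + 6))
            + 1 / ((8*k + 7) * (8*k + 8)) + 1 / ((8*k + 8) * (8*k + 9)) : ℝ) := by
  set F : ℕ → ℝ → ℝ := fun k u => (1/16 : ℝ)^k * (u ^ (8*k) * qpoly u) with hF
  have hcont : ∀ k, Continuous (F k) := by
    intro k
    simp only [hF, qpoly]
    fun_prop
  -- Step A : each term equals an integral
  have stepA : ∀ k : ℕ, (1 / 16^k) *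
          (8 / ((8*(k:ℝ) + 1) * (8*k + 2)) - 4 / ((8*k + 3) * (8*k + 4))
            - 4 / ((8*k + 4) * (8*k + 5)) - 2 / ((8*k + 5) * (8*k + 6))
            + 1 / ((8*k + 7) * (8*k + 8)) + 1 / ((8*k + 8) * (8*k + 9)) : ℝ)
        = ∫ u in Ioc (0:ℝ) 1, F k u := by
    intro k
    have h1 : ∫ u in Ioc (0:ℝ) 1, F k u = ∫ u in (0:ℝ)..1, F k u :=
      (integral_of_le (by norm_num)).symm
    rw [h1, hF]
    simp only
    rw [intervalIntegral.integral_const_mul, integral_qpoly k]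
    have d1 : (8*(k:ℝ)+1) ≠ 0 := by positivity
    have d2 : (8*(k:ℝ)+2) ≠ 0 := by positivity
    have d3 : (8*(k:ℝ)+3) ≠ 0 := by positivity
    have d4 : (8*(k:ℝ)+4) ≠ 0 := by positivity
    have d5 : (8*(k:ℝ)+5) ≠ 0 := by positivity
    have d6 : (8*(k:ℝ)+6) ≠ 0 := by positivity
    have d7 : (8*(k:ℝ)+7) ≠ 0 := by positivity
    have d8 : (8*(k:ℝ)+8) ≠ 0 := by positivity
    have d9 : (8*(k:ℝ)+9) ≠ 0 := by positivity
    have h16 : ((16:ℝ)^k) ≠ 0 := by positivity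
    rw [one_div, ← inv_pow, inv_pow, ← one_div, div_pow, one_pow]
    field_simp
    ring
  -- integrability
  have hint : ∀ k, MeasureTheory.Integrable (F k) (volume.restrict (Ioc (0:ℝ) 1)) :=
    fun k => (hcont k).integrableOn_Ioc
  -- summability of integrals of norms
  have hnorm : Summable fun k => ∫ u in Ioc (0:ℝ) 1, ‖F k u‖ := by
    refine Summable.of_nonneg_of_le
      (fun k => integral_nonneg fun u => norm_nonneg _)
      (fun k => ?_) ((summable_geometric_of_lt_one
        (by norm_num : (0:ℝ) ≤ 1/16) (by norm_num : (1/16:ℝ) < 1)).mul_left 26)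
    have hb : ∀ u ∈ Ioc (0:ℝ) 1, ‖F k u‖ ≤ 26 * (1/16:ℝ)^k := by
      intro u hu
      obtain ⟨hu0, hu1⟩ := hu
      have p1 : (0:ℝ) ≤ u := le_of_lt hu0
      have habs : |u| ≤ 1 := by rw [abs_of_nonneg p1]; exact hu1
      have h1 : |u ^ (8*k)| ≤ 1 := by
        rw [abs_pow]; exact pow_le_one₀ (abs_nonneg u) habs
      have q2 : u^2 ≤ 1 := pow_le_one₀ p1 hu1
      have q4 : u^4 ≤ 1 := pow_le_one₀ p1 hu1
      have q5 : u^5 ≤ 1 := pow_le_one₀ p1 hu1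
      have q6 : u^6 ≤ 1 := pow_le_one₀ p1 hu1
      have q8 : u^8 ≤ 1 := pow_le_one₀ p1 hu1
      have r2 : (0:ℝ) ≤ u^2 := by positivity
      have r4 : (0:ℝ) ≤ u^4 := by positivity
      have r5 : (0:ℝ) ≤ u^5 := by positivity
      have r6 : (0:ℝ) ≤ u^6 := by positivity
      have r8 : (0:ℝ) ≤ u^8 := by positivity
      have h2 : |qpoly u| ≤ 26 := by
        rw [abs_le]; constructor <;> simp only [qpoly] <;> nlinarith
      have hFc : ‖F k u‖ = (1/16:ℝ)^k * (|u ^ (8*k)| * |qpoly u|) := by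
        rw [hF]; simp only [Real.norm_eq_abs, abs_mul]
        rw [abs_of_nonneg (by positivity : (0:ℝ) ≤ (1/16:ℝ)^k)]
      rw [hFc]
      have : (|u ^ (8*k)| * |qpoly u|) ≤ 26 := by nlinarith [abs_nonneg (u^(8*k)), abs_nonneg (qpoly u)]
      nlinarith [pow_nonneg (by norm_num : (0:ℝ) ≤ 1/16) k]
    calc ∫ u in Ioc (0:ℝ) 1, ‖F k u‖
        ≤ ∫ _ in Ioc (0:ℝ) 1, 26 * (1/16:ℝ)^k :=
          setIntegral_mono_on ((hcont k).norm.integrableOn_Ioc)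
            (integrableOn_const (by simp) (by exact enorm_ne_top)) measurableSet_Ioc hb
      _ = 26 * (1/16:ℝ)^k := by
          rw [setIntegral_const]; simp [Real.volume_Ioc]
  -- Step C : pointwise sum of the geometric series
  have stepC : ∫ u in Ioc (0:ℝ) 1, (∑' k, F k u)
      = ∫ u in Ioc (0:ℝ) 1, (16 - 16/((u-1)^2+1)) := by
    apply setIntegral_congr_fun measurableSet_Ioc
    intro u hu
    obtain ⟨hu0, hu1⟩ := hu
    have p1 : (0:ℝ) ≤ u := le_of_lt hu0
    have q8 : u^8 ≤ 1 := pow_le_one₀ p1 hu1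
    have r8 : (0:ℝ) ≤ u^8 := by positivity
    have hr0 : (0:ℝ) ≤ u^8/16 := by positivity
    have hr1 : u^8/16 < 1 := by nlinarith
    calc ∑' k, F k u = ∑' k, (u^8/16)^k * qpoly u := by
          refine tsum_congr fun k => ?_
          rw [hF]; simp only
          rw [div_pow, pow_mul]
          rw [one_pow, div_pow]
          ring
      _ = (∑' k : ℕ, (u^8/16)^k) * qpoly u := tsum_mul_right
      _ = (1 - u^8/16)⁻¹ * qpoly u := by rw [tsum_geometric_of_lt_one hr0 hr1]
      _ = 16 - 16/((u-1)^2+1) := by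
          have h1 : (1 - u^8/16 : ℝ) ≠ 0 := by intro h; rw [sub_eq_zero] at h; linarith
          have h2 : ((u-1)^2+1 : ℝ) ≠ 0 := by positivity
          have h3 : (16 - u^8 : ℝ) ≠ 0 := by intro h; rw [sub_eq_zero] at h; linarith
          rw [qpoly]
          field_simp [h1, h2, h3]
          ring
  -- Step D : evaluate the integral
  have stepD : ∫ u in Ioc (0:ℝ) 1, (16 - 16/((u-1)^2+1)) = 16 - 4*Real.pi := by
    rw [← integral_of_le (by norm_num : (0:ℝ) ≤ 1)]
    have hderiv : ∀ u ∈ uIcc (0:ℝ) 1,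
        HasDerivAt (fun v => 16*v - 16 * Real.arctan (v-1)) (16 - 16/((u-1)^2+1)) u := by
      intro u _
      have h1 : HasDerivAt (fun v:ℝ => v - 1) 1 u := (hasDerivAt_id u).sub_const 1
      have h2 : HasDerivAt (fun v:ℝ => Real.arctan (v-1)) (1/(1+(u-1)^2) * 1) u :=
        by exact (Real.hasDerivAt_arctan (u-1)).comp u h1
      have h3 := ((hasDerivAt_id u).const_mul (16:ℝ)).sub (h2.const_mul 16)
      refine h3.congr_deriv ?_
      have h2' : ((u-1)^2+1 : ℝ) ≠ 0 := by positivity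
      have h2'' : (1+(u-1)^2 : ℝ) ≠ 0 := by positivity
      field_simp
      ring
    rw [integral_eq_sub_of_hasDerivAt hderiv ?_]
    · simp [Real.arctan_one, Real.arctan_zero, Real.arctan_neg]
      ring
    · apply Continuous.intervalIntegrable
      have hc : Continuous fun u:ℝ => 16/((u-1)^2+1) :=
        continuous_const.div (by fun_prop) (fun u => by positivity)
      exact continuous_const.sub hc
  have key : (∑' k : ℕ, (1 / 16^k) *
          (8 / ((8*(k:ℝ) + 1) * (8*k + 2)) - 4 / ((8*k + 3) * (8*k + 4))
            - 4 / ((8*k + 4) * (8*k + 5)) - 2 / ((8*k + 5) * (8*k + 6))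
            + 1 / ((8*k + 7) * (8*k + 8)) + 1 / ((8*k + 8) * (8*k + 9)) : ℝ))
        = 16 - 4*Real.pi := by
    calc (∑' k : ℕ, (1 / 16^k) *
          (8 / ((8*(k:ℝ) + 1) * (8*k + 2)) - 4 / ((8*k + 3) * (8*k + 4))
            - 4 / ((8*k + 4) * (8*k + 5)) - 2 / ((8*k + 5) * (8*k + 6))
            + 1 / ((8*k + 7) * (8*k + 8)) + 1 / ((8*k + 8) * (8*k + 9)) : ℝ))
        = ∑' k, ∫ u in Ioc (0:ℝ) 1, F k u := tsum_congr stepA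
      _ = ∫ u in Ioc (0:ℝ) 1, (∑' k, F k u) :=
          MeasureTheory.integral_tsum_of_summable_integral_norm hint hnorm
      _ = _ := stepC
      _ = _ := stepD
  rw [key]
  ring
end

section
/- log 2 = Σ_{k=0}^∞ (1/16^k) [1/((8k+1)(8k+2)) + 1/((8k+2)(8k+3)) + (1/2)/((8k+3)(8k+4)) - (1/4)/((8k+5)(8k+6)) - (1/4)/((8k+6)(8k+7)) - (1/8)/((8k+7)(8k+8))]. -/
set_option maxHeartbeats 1000000

theorem stmt_8 :
    Real.log 2
      = ∑' k : ℕ, (1 / 16^k) *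
          (1 / ((8*k + 1) * (8*k + 2)) + 1 / ((8*k + 2) * (8*k + 3))
            + (1/2) / ((8*k + 3) * (8*k + 4)) - (1/4) / ((8*k + 5) * (8*k + 6))
            - (1/4) / ((8*k + 6) * (8*k + 7)) - (1/8) / ((8*k + 7) * (8*k + 8)) : ℝ) := by
  set z : ℂ := (1 + Complex.I) / 2 with hzdef
  have habs2 : ‖1 + Complex.I‖ = Real.sqrt 2 := by
    rw [Complex.norm_def, Complex.normSq_apply]
    norm_num
  have hs2 : Real.sqrt 2 < 2 := by
    nlinarith [Real.sq_sqrt (by norm_num : (2:ℝ) ≥ 0), Real.sqrt_nonneg 2]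
  have hz : ‖z‖ < 1 := by
    rw [hzdef, norm_div, habs2,
      Complex.norm_two, div_lt_one (by norm_num)]
    exact hs2
  have h1 := Complex.hasSum_taylorSeries_neg_log hz
  have h2 : HasSum (fun n : ℕ => (z ^ n / (n : ℂ)).re) ((1/2) * Real.log 2) := by
    have := Complex.hasSum_re h1
    convert this using 1
    rw [Complex.neg_re, Complex.log_re]
    have : (1 : ℂ) - z = (1 - Complex.I) / 2 := by rw [hzdef]; ring
    rw [this]
    have habs2' : ‖1 - Complex.I‖ = Real.sqrt 2 := by
      rw [Complex.norm_def, Complex.normSq_apply]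
      norm_num
    rw [norm_div, habs2', Complex.norm_two]
    rw [Real.log_div (by positivity) (by norm_num), Real.log_sqrt (by norm_num)]
    ring
  have h3 : HasSum (fun n : ℕ => (z ^ (n + 1) / ((n : ℂ) + 1)).re)
      ((1/2) * Real.log 2) := by
    have := (hasSum_nat_add_iff (f := fun n : ℕ => (z ^ n / (n : ℂ)).re) 1
      (g := (1/2) * Real.log 2)).mpr (by simpa using h2)
    simpa using this
  have h4 := ((Nat.divModEquiv 8).symm.hasSum_iff).mpr h3
  have h5 : HasSum (fun k : ℕ => ∑ j : Fin 8,
      (z ^ (k * 8 + (j : ℕ) + 1) / ((k * 8 + (j : ℕ) : ℕ) + 1 : ℂ)).re)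
      ((1/2) * Real.log 2) := by
    refine h4.prod_fiberwise fun k => ?_
    exact hasSum_fintype _
  have h6 := h5.mul_left 2
  have hz2 : z ^ 2 = Complex.I / 2 := by
    rw [hzdef]; rw [div_pow]; rw [add_sq]; rw [Complex.I_sq]; ring
  have hz8 : z ^ 8 = 1 / 16 := by
    have : z ^ 8 = (z ^ 2) ^ 4 := by ring
    rw [this, hz2, div_pow, show (Complex.I)^4 = 1 by
      rw [show (4:ℕ) = 2*2 from rfl, pow_mul, Complex.I_sq]; norm_num]
    norm_num
  have key : HasSum (fun k : ℕ => (1 / 16^k) *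
          (1 / ((8*k + 1) * (8*k + 2)) + 1 / ((8*k + 2) * (8*k + 3))
            + (1/2) / ((8*k + 3) * (8*k + 4)) - (1/4) / ((8*k + 5) * (8*k + 6))
            - (1/4) / ((8*k + 6) * (8*k + 7)) - (1/8) / ((8*k + 7) * (8*k + 8)) : ℝ))
      (Real.log 2) := by
    have h2' : 2 * ((1/2) * Real.log 2) = Real.log 2 := by ring
    rw [← h2']
    convert h6 using 2 with k
    · rfl
    have hpow : ∀ j : ℕ, z ^ (k * 8 + j + 1) = (((1/16 : ℝ)) ^ k : ℝ) * z ^ (j + 1) := by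
      intro j
      rw [pow_add, pow_add, pow_mul']
      push_cast
      rw [hz8]
      norm_num
      ring
    have hre : ∀ j : ℕ, (z ^ (k * 8 + j + 1) / ((k * 8 + j : ℕ) + 1 : ℂ)).re
        = (1/16 : ℝ) ^ k * (z ^ (j + 1)).re / ((k * 8 + j : ℕ) + 1 : ℝ) := by
      intro j
      rw [hpow j]
      rw [show ((k * 8 + j : ℕ) + 1 : ℂ) = (((k * 8 + j : ℕ) + 1 : ℝ) : ℂ) by push_cast; ring]
      rw [Complex.div_ofReal_re, Complex.re_ofReal_mul]
    rw [Fin.sum_univ_eight]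
    simp only [show ((0:Fin 8):ℕ) = 0 from rfl, show ((1:Fin 8):ℕ) = 1 from rfl,
      show ((2:Fin 8):ℕ) = 2 from rfl, show ((3:Fin 8):ℕ) = 3 from rfl,
      show ((4:Fin 8):ℕ) = 4 from rfl, show ((5:Fin 8):ℕ) = 5 from rfl,
      show ((6:Fin 8):ℕ) = 6 from rfl, show ((7:Fin 8):ℕ) = 7 from rfl]
    have hI3 : Complex.I ^ 3 = -Complex.I := by
      rw [pow_succ, Complex.I_sq]; ring
    have e1 : (z ^ 1).re = 1/2 := by
      rw [pow_one, hzdef]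
      norm_num [Complex.div_re, Complex.normSq_apply]
    have e2 : (z ^ 2).re = 0 := by rw [hz2]; simp
    have e3 : (z ^ 3).re = -(1/4) := by
      rw [show z^3 = z * z^2 by ring, hz2, hzdef]
      simp [Complex.div_re, Complex.normSq_apply]
      norm_num
    have e4 : (z ^ 4).re = -(1/4) := by
      rw [show z^4 = (z^2)^2 by ring, hz2, div_pow, Complex.I_sq]
      norm_num
    have e5 : (z ^ 5).re = -(1/8) := by
      rw [show z^5 = z * (z^2)^2 by ring, hz2, div_pow, Complex.I_sq, hzdef]
      norm_num [Complex.div_re, Complex.normSq_apply]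
    have e6 : (z ^ 6).re = 0 := by
      rw [show z^6 = (z^2)^3 by ring, hz2, div_pow, hI3]
      norm_num [Complex.div_re, Complex.normSq_apply]
    have e7 : (z ^ 7).re = 1/16 := by
      rw [show z^7 = z * (z^2)^3 by ring, hz2, div_pow, hI3, hzdef]
      norm_num [Complex.div_re, Complex.normSq_apply]
    have e8 : (z ^ 8).re = 1/16 := by rw [hz8]; norm_num
    rw [hre 0, hre 1, hre 2, hre 3, hre 4, hre 5, hre 6, hre 7]
    simp only [Nat.reduceAdd, e1, e2, e3, e4, e5, e6, e7, e8]
    have hk : (0:ℝ) ≤ (k:ℝ) := Nat.cast_nonneg k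
    push_cast
    have d1 : (8*(k:ℝ) + 1) ≠ 0 := by positivity
    have d2 : (8*(k:ℝ) + 2) ≠ 0 := by positivity
    have d3 : (8*(k:ℝ) + 3) ≠ 0 := by positivity
    have d4 : (8*(k:ℝ) + 4) ≠ 0 := by positivity
    have d5 : (8*(k:ℝ) + 5) ≠ 0 := by positivity
    have d6 : (8*(k:ℝ) + 6) ≠ 0 := by positivity
    have d7 : (8*(k:ℝ) + 7) ≠ 0 := by positivity
    have d8 : (8*(k:ℝ) + 8) ≠ 0 := by positivity
    have hp : (16:ℝ)^k ≠ 0 := by positivity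
    simp only [one_div_pow]
    field_simp
    ring
  exact key.tsum_eq.symm
end

section
/- For every natural number n ≥ 1, R_n := π/4 - Σ_{m=0}^{n-1} (-1)^m/(2m+1) satisfies R_n = ((-1)ⁿ (2n-1)!/16) Σ_{k=0}^∞ (1/16^k) [8/(8k+1)_{2n} - 4/(8k+3)_{2n} - 4/(8k+4)_{2n} - 2/(8k+5)_{2n} + 1/(8k+7)_{2n} + 1/(8k+8)_{2n}]. -/
open MeasureTheory intervalIntegral Real Set

/-- The rising factorial (Pochhammer symbol) on the reals. -/
noncomputable def poch (a : ℝ) (m : ℕ) : ℝ := ∏ i ∈ Finset.range m, (a + i)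




lemma poch_nat (p m : ℕ) : poch ((p : ℝ) + 1) m = ((p + m).factorial : ℝ) / p.factorial := by
  induction m with
  | zero =>
      have hp : ((p.factorial : ℝ)) ≠ 0 := Nat.cast_ne_zero.mpr (Nat.factorial_ne_zero p)
      simp [poch, hp]
  | succ m ih =>
      rw [poch, Finset.prod_range_succ, ← poch, ih]
      have h : (p + (m+1)).factorial = (p + m + 1) * (p + m).factorial := by
        rw [show p + (m+1) = (p+m)+1 by ring, Nat.factorial_succ]
      rw [h]
      have hp : ((p.factorial : ℝ)) ≠ 0 := Nat.cast_ne_zero.mpr (Nat.factorial_ne_zero p)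
      field_simp
      push_cast
      ring

lemma cont_mono (a b : ℕ) : Continuous (fun x : ℝ => x ^ a * (1 - x) ^ b) :=
  (continuous_pow a).mul ((continuous_const.sub continuous_id).pow b)

lemma integ_mono (a b : ℕ) :
    IntervalIntegrable (fun x : ℝ => x ^ a * (1 - x) ^ b) volume 0 1 :=
  (cont_mono a b).intervalIntegrable 0 1

lemma beta_nat (p q : ℕ) : (∫ x in (0:ℝ)..1, x ^ p * (1 - x) ^ q)
    = (p.factorial : ℝ) * q.factorial / (p + q + 1).factorial := by
  induction q generalizing p with
  | zero =>
      simp only [pow_zero, mul_one, integral_pow]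
      rw [show p + 0 + 1 = p + 1 by ring, Nat.factorial_succ]
      have hp : ((p.factorial : ℝ)) ≠ 0 := Nat.cast_ne_zero.mpr (Nat.factorial_ne_zero p)
      push_cast
      field_simp
      simp
  | succ q ih =>
      have h1 : ∀ x : ℝ, x ^ p * (1-x) ^ (q+1)
          = x ^ p * (1-x) ^ q - x ^ (p+1) * (1-x) ^ q := by
        intro x; ring
      rw [intervalIntegral.integral_congr (fun x _ => h1 x),
        intervalIntegral.integral_sub (integ_mono p q) (integ_mono (p+1) q), ih p, ih (p+1)]
      have e1 : (p + 1) + q + 1 = p + (q + 1) + 1 := by ring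
      rw [e1]
      have h2 : ((p + (q+1) + 1).factorial : ℝ) = (p + q + 2) * (p + q + 1).factorial := by
        rw [show p + (q+1) + 1 = (p+q+1)+1 by ring, Nat.factorial_succ]
        push_cast; ring
      rw [h2, Nat.factorial_succ (p), Nat.factorial_succ q]
      have f1 : (0:ℝ) < (p+q+1).factorial := by exact_mod_cast (p+q+1).factorial_pos
      have f2 : (0:ℝ) < p.factorial := by exact_mod_cast p.factorial_pos
      have f3 : (0:ℝ) < q.factorial := by exact_mod_cast q.factorial_pos
      field_simp
      push_cast
      ring


lemma term_eq (c : ℝ) (a q : ℕ) :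
    c / poch ((a : ℝ) + 1) (q + 1)
      = ((q.factorial : ℝ))⁻¹ * (c * ∫ x in (0:ℝ)..1, x ^ a * (1 - x) ^ q) := by
  rw [poch_nat, beta_nat, show a + q + 1 = a + (q + 1) by ring]
  have f1 : (0:ℝ) < (a + (q+1)).factorial := by exact_mod_cast (a+(q+1)).factorial_pos
  have f2 : (0:ℝ) < a.factorial := by exact_mod_cast a.factorial_pos
  have f3 : (0:ℝ) < q.factorial := by exact_mod_cast q.factorial_pos
  field_simp

lemma leibniz_int (n : ℕ) :
    Real.pi/4 - ∑ m ∈ Finset.range n, (-1:ℝ)^m / (2*m + 1)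
      = (-1)^n * ∫ x in (0:ℝ)..1, x ^ (2*n) / (x^2 + 1) := by
  induction n with
  | zero =>
      simp only [Finset.range_zero, Finset.sum_empty, sub_zero, Nat.mul_zero, pow_zero, one_mul]
      rw [intervalIntegral.integral_congr (g := fun x : ℝ => ((1:ℝ) + x^2)⁻¹)
        (fun x _ => by simp [one_div, add_comm])]
      rw [integral_inv_one_add_sq, Real.arctan_one, Real.arctan_zero, sub_zero]
  | succ n ih =>
      have hint : ∀ a : ℕ, IntervalIntegrable (fun x : ℝ => x ^ a / (x^2+1)) volume 0 1 := by
        intro a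
        apply Continuous.intervalIntegrable
        exact (continuous_pow a).div (by continuity) (fun x => by positivity)
      have h1 : ∀ x : ℝ, x ^ (2*(n+1)) / (x^2+1) = x ^ (2*n) - x ^ (2*n) / (x^2+1) := by
        intro x
        have hx : x^2 + 1 ≠ 0 := by positivity
        field_simp
        ring
      rw [Finset.sum_range_succ, intervalIntegral.integral_congr (fun x _ => h1 x),
        intervalIntegral.integral_sub ((continuous_pow (2*n)).intervalIntegrable 0 1) (hint (2*n)),
        integral_pow]
      rw [sub_add_eq_sub_sub] at *
      rw [show Real.pi/4 - ∑ m ∈ Finset.range n, (-1:ℝ)^m / (2*m + 1) -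
        (-1:ℝ)^n / (2*n+1) = ((-1)^n * ∫ x in (0:ℝ)..1, x ^ (2*n) / (x^2+1)) -
        (-1:ℝ)^n / (2*n+1) from by rw [ih]]
      have : ((2*n : ℕ) : ℝ) + 1 ≠ 0 := by positivity
      push_cast
      field_simp
      ring





noncomputable def gfun (m k : ℕ) (x : ℝ) : ℝ :=
  (16:ℝ)⁻¹^k * (8 * (x^(8*k) * (1-x)^(2*m+1)) - 4 * (x^(8*k+2) * (1-x)^(2*m+1))
    - 4 * (x^(8*k+3) * (1-x)^(2*m+1)) - 2 * (x^(8*k+4) * (1-x)^(2*m+1))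
    + x^(8*k+6) * (1-x)^(2*m+1) + x^(8*k+7) * (1-x)^(2*m+1))

lemma gfun_cont (m k : ℕ) : Continuous (gfun m k) := by
  unfold gfun; fun_prop

lemma gfun_integral (m k : ℕ) :
    (∫ x in (0:ℝ)..1, gfun m k x) = (16:ℝ)⁻¹^k *
      (8 * (∫ x in (0:ℝ)..1, x^(8*k) * (1-x)^(2*m+1))
        - 4 * (∫ x in (0:ℝ)..1, x^(8*k+2) * (1-x)^(2*m+1))
        - 4 * (∫ x in (0:ℝ)..1, x^(8*k+3) * (1-x)^(2*m+1))
        - 2 * (∫ x in (0:ℝ)..1, x^(8*k+4) * (1-x)^(2*m+1))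
        + (∫ x in (0:ℝ)..1, x^(8*k+6) * (1-x)^(2*m+1))
        + (∫ x in (0:ℝ)..1, x^(8*k+7) * (1-x)^(2*m+1))) := by
  have i1 := integ_mono (8*k) (2*m+1)
  have i2 := integ_mono (8*k+2) (2*m+1)
  have i3 := integ_mono (8*k+3) (2*m+1)
  have i4 := integ_mono (8*k+4) (2*m+1)
  have i6 := integ_mono (8*k+6) (2*m+1)
  have i7 := integ_mono (8*k+7) (2*m+1)
  unfold gfun
  rw [intervalIntegral.integral_const_mul]
  congr 1
  rw [intervalIntegral.integral_add (((((i1.const_mul 8).sub (i2.const_mul 4)).sub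
        (i3.const_mul 4)).sub (i4.const_mul 2)).add i6) i7,
    intervalIntegral.integral_add ((((i1.const_mul 8).sub (i2.const_mul 4)).sub
        (i3.const_mul 4)).sub (i4.const_mul 2)) i6,
    intervalIntegral.integral_sub (((i1.const_mul 8).sub (i2.const_mul 4)).sub
        (i3.const_mul 4)) (i4.const_mul 2),
    intervalIntegral.integral_sub ((i1.const_mul 8).sub (i2.const_mul 4)) (i3.const_mul 4),
    intervalIntegral.integral_sub (i1.const_mul 8) (i2.const_mul 4),
    intervalIntegral.integral_const_mul, intervalIntegral.integral_const_mul,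
    intervalIntegral.integral_const_mul, intervalIntegral.integral_const_mul]

lemma summand_eq (m k : ℕ) :
    (1 / 16^k : ℝ) * (8 / poch (8*(k:ℝ) + 1) (2*(m+1)) - 4 / poch (8*(k:ℝ) + 3) (2*(m+1))
      - 4 / poch (8*(k:ℝ) + 4) (2*(m+1)) - 2 / poch (8*(k:ℝ) + 5) (2*(m+1))
      + 1 / poch (8*(k:ℝ) + 7) (2*(m+1)) + 1 / poch (8*(k:ℝ) + 8) (2*(m+1)))
    = ((2*m+1).factorial : ℝ)⁻¹ * ∫ x in (0:ℝ)..1, gfun m k x := by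
  have c1 : (8*(k:ℝ)+1) = ((8*k : ℕ):ℝ)+1 := by push_cast; ring
  have c3 : (8*(k:ℝ)+3) = ((8*k+2 : ℕ):ℝ)+1 := by push_cast; ring
  have c4 : (8*(k:ℝ)+4) = ((8*k+3 : ℕ):ℝ)+1 := by push_cast; ring
  have c5 : (8*(k:ℝ)+5) = ((8*k+4 : ℕ):ℝ)+1 := by push_cast; ring
  have c7 : (8*(k:ℝ)+7) = ((8*k+6 : ℕ):ℝ)+1 := by push_cast; ring
  have c8 : (8*(k:ℝ)+8) = ((8*k+7 : ℕ):ℝ)+1 := by push_cast; ring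
  have hq : 2*(m+1) = (2*m+1)+1 := by ring
  rw [hq, c1, c3, c4, c5, c7, c8, term_eq, term_eq, term_eq, term_eq, term_eq, term_eq,
    gfun_integral]
  rw [one_div, ← inv_pow]
  ring



lemma gfun_bound (m k : ℕ) {x : ℝ} (hx : x ∈ Ioc (0:ℝ) 1) :
    ‖gfun m k x‖ ≤ 10 * (16⁻¹:ℝ)^k := by
  obtain ⟨hx0, hx1⟩ := hx
  have h0 : (0:ℝ) ≤ x := le_of_lt hx0
  have h1 : (0:ℝ) ≤ 1 - x := by linarith
  have h1' : (1:ℝ) - x ≤ 1 := by linarith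
  have hA : ∀ a b : ℕ, 0 ≤ x^a*(1-x)^b ∧ x^a*(1-x)^b ≤ 1 := by
    intro a b
    constructor
    · positivity
    · exact mul_le_one₀ (pow_le_one₀ h0 hx1) (by positivity) (pow_le_one₀ h1 h1')
  obtain ⟨hA1, hA1'⟩ := hA (8*k) (2*m+1)
  obtain ⟨hA2, hA2'⟩ := hA (8*k+2) (2*m+1)
  obtain ⟨hA3, hA3'⟩ := hA (8*k+3) (2*m+1)
  obtain ⟨hA4, hA4'⟩ := hA (8*k+4) (2*m+1)
  obtain ⟨hA6, hA6'⟩ := hA (8*k+6) (2*m+1)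
  obtain ⟨hA7, hA7'⟩ := hA (8*k+7) (2*m+1)
  rw [gfun, norm_mul, norm_pow]
  have : ‖(16:ℝ)⁻¹‖ = (16:ℝ)⁻¹ := by rw [Real.norm_eq_abs, abs_of_pos]; norm_num
  rw [this, mul_comm]
  apply mul_le_mul_of_nonneg_right _ (by positivity)
  rw [Real.norm_eq_abs, abs_le]
  constructor <;> linarith

lemma tsum_gfun_eq (m : ℕ) {x : ℝ} (hx : x ∈ Ioc (0:ℝ) 1) :
    ∑' k : ℕ, gfun m k x = 16*(1-x)^(2*m+2) / ((1-x)^2+1) := by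
  obtain ⟨hx0, hx1⟩ := hx
  have h0 : (0:ℝ) ≤ x := le_of_lt hx0
  have hk : ∀ k : ℕ, gfun m k x = (x^8*16⁻¹)^k *
      ((1-x)^(2*m+1) * (8 - 4*x^2 - 4*x^3 - 2*x^4 + x^6 + x^7)) := by
    intro k
    simp only [gfun, mul_pow, ← pow_mul]
    ring
  rw [tsum_congr hk, tsum_mul_right]
  have hr0 : (0:ℝ) ≤ x^8*16⁻¹ := by positivity
  have hx8 : x^8 ≤ 1 := pow_le_one₀ h0 hx1
  have hr1 : x^8*16⁻¹ < 1 := by nlinarith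
  rw [tsum_geometric_of_lt_one hr0 hr1]
  have h16 : (1:ℝ) - x^8*16⁻¹ ≠ 0 := ne_of_gt (by linarith)
  have h16' : (16:ℝ) - x^8 ≠ 0 := ne_of_gt (by linarith)
  have hden : ((1:ℝ)-x)^2 + 1 ≠ 0 := by positivity
  field_simp
  ring

lemma tsum_integral_swap (m : ℕ) :
    ∑' k : ℕ, (∫ x in (0:ℝ)..1, gfun m k x)
      = ∫ x in (0:ℝ)..1, 16*(1-x)^(2*m+2) / ((1-x)^2+1) := by
  have hmeas : ∀ k : ℕ, AEStronglyMeasurable (gfun m k) (volume.restrict (Ioc (0:ℝ) 1)) :=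
    fun k => (gfun_cont m k).aestronglyMeasurable.restrict
  have hb2 : ∀ k : ℕ, (∫⁻ x in Ioc (0:ℝ) 1, ‖gfun m k x‖₊)
      ≤ ENNReal.ofReal (10 * (16⁻¹:ℝ)^k) := by
    intro k
    calc ∫⁻ x in Ioc (0:ℝ) 1, (‖gfun m k x‖₊ : ENNReal)
        ≤ ∫⁻ _x in Ioc (0:ℝ) 1, ENNReal.ofReal (10*(16⁻¹:ℝ)^k) := by
          apply lintegral_mono_ae
          filter_upwards [ae_restrict_mem measurableSet_Ioc] with x hx
          rw [← ENNReal.ofReal_coe_nnreal, coe_nnnorm]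
          exact ENNReal.ofReal_le_ofReal (gfun_bound m k hx)
      _ = ENNReal.ofReal (10*(16⁻¹:ℝ)^k) := by
          rw [lintegral_const, Measure.restrict_apply_univ, Real.volume_Ioc]
          simp
  have hne : (∑' k : ℕ, ∫⁻ x in Ioc (0:ℝ) 1, ‖gfun m k x‖₊) ≠ ⊤ := by
    apply ne_top_of_le_ne_top _ (ENNReal.tsum_le_tsum hb2)
    have he : ∀ k : ℕ, ENNReal.ofReal (10*(16⁻¹:ℝ)^k)
        = ENNReal.ofReal 10 * (ENNReal.ofReal 16⁻¹)^k := by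
      intro k
      rw [ENNReal.ofReal_mul (by norm_num), ENNReal.ofReal_pow (by norm_num)]
    rw [tsum_congr he, ENNReal.tsum_mul_left, ENNReal.tsum_geometric]
    apply ENNReal.mul_ne_top ENNReal.ofReal_ne_top
    refine ENNReal.inv_ne_top.mpr ?_
    rw [Ne, tsub_eq_zero_iff_le]
    apply not_le.mpr
    rw [ENNReal.ofReal_lt_one]
    norm_num
  have h1 : ∀ k : ℕ, (∫ x in (0:ℝ)..1, gfun m k x) = ∫ x in Ioc (0:ℝ) 1, gfun m k x :=
    fun k => intervalIntegral.integral_of_le zero_le_one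
  rw [tsum_congr h1, ← MeasureTheory.integral_tsum hmeas hne,
    intervalIntegral.integral_of_le zero_le_one]
  apply MeasureTheory.setIntegral_congr_fun measurableSet_Ioc
  intro x hx
  exact tsum_gfun_eq m hx


theorem stmt_9 (n : ℕ) (hn : 1 ≤ n) :
    Real.pi/4 - ∑ m ∈ Finset.range n, (-1:ℝ)^m / (2*m + 1)
      = ((-1)^n * (Nat.factorial (2*n - 1) : ℝ) / 16) * ∑' k : ℕ, (1 / 16^k) *
          (8 / poch (8*k + 1) (2*n) - 4 / poch (8*k + 3) (2*n)
            - 4 / poch (8*k + 4) (2*n) - 2 / poch (8*k + 5) (2*n)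
            + 1 / poch (8*k + 7) (2*n) + 1 / poch (8*k + 8) (2*n)) := by
  obtain ⟨m, rfl⟩ : ∃ m, n = m + 1 := ⟨n - 1, (Nat.succ_pred_eq_of_pos hn).symm⟩
  rw [leibniz_int (m+1)]
  rw [show 2*(m+1) - 1 = 2*m+1 from by omega]
  rw [tsum_congr (fun k => summand_eq m k), tsum_mul_left, tsum_integral_swap]
  have sub1 : (∫ x in (0:ℝ)..1, 16*(1-x)^(2*m+2) / ((1-x)^2+1))
      = ∫ x in (0:ℝ)..1, 16*x^(2*m+2)/(x^2+1) := by
    simpa using intervalIntegral.integral_comp_sub_left (a := 0) (b := 1)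
      (fun u : ℝ => 16*u^(2*m+2)/(u^2+1)) 1
  rw [sub1]
  have sub2 : (∫ x in (0:ℝ)..1, 16*x^(2*m+2)/(x^2+1))
      = 16 * ∫ x in (0:ℝ)..1, x^(2*(m+1))/(x^2+1) := by
    rw [show 2*(m+1) = 2*m+2 from by ring, ← intervalIntegral.integral_const_mul]
    apply intervalIntegral.integral_congr
    intro x _
    simp only [mul_div_assoc]
  rw [sub2]
  have hf : ((2*m+1).factorial : ℝ) ≠ 0 := Nat.cast_ne_zero.mpr (Nat.factorial_ne_zero _)
  field_simp
end

section
/- For every natural number n ≥ 1, R'_n := Σ_{k=n}^∞ (-1)^(k-1)/k satisfies R'_n = (-1)^(n-1) (2n-1)! Σ_{k=0}^∞ (1/16^k) [1/(8k+1)_{2n} + 1/(8k+2)_{2n} + 1/(2·(8k+3)_{2n}) - 1/(4·(8k+5)_{2n}) - 1/(4·(8k+6)_{2n}) - 1/(8·(8k+7)_{2n})]. -/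
open MeasureTheory intervalIntegral Filter

lemma poch_pos (a : ℕ) (ha : 1 ≤ a) (m : ℕ) : 0 < poch a m := by
  apply Finset.prod_pos
  intro i _
  positivity

lemma beta_nat_s10 (a m : ℕ) (ha : 1 ≤ a) (hm : 1 ≤ m) :
    ∫ x in (0:ℝ)..1, x^(a-1) * (1-x)^(m-1) = (m-1).factorial / poch a m := by
  have key := Complex.betaIntegral_eval_nat_add_one_right
    (u := (a:ℂ)) (by simpa using Nat.lt_of_lt_of_le Nat.zero_lt_one ha : 0 < Complex.re a) (m-1)
  have hm' : ((m:ℂ)) = ((m-1 : ℕ):ℂ) + 1 := by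
    push_cast [Nat.cast_sub hm]; ring
  have hb : Complex.betaIntegral a m
      = Complex.ofReal (∫ x in (0:ℝ)..1, x^(a-1) * (1-x)^(m-1)) := by
    rw [Complex.betaIntegral, ← intervalIntegral.integral_ofReal]
    apply intervalIntegral.integral_congr
    intro x _
    have h1 : (a:ℂ) - 1 = ((a-1:ℕ):ℂ) := by push_cast [Nat.cast_sub ha]; ring
    have h2 : (m:ℂ) - 1 = ((m-1:ℕ):ℂ) := by push_cast [Nat.cast_sub hm]; ring
    rw [h1, h2]
    push_cast [Complex.cpow_natCast]
    ring
  rw [hm', key] at hb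
  have hr : ((m-1).factorial : ℂ) / ∏ j ∈ Finset.range (m-1+1), ((a:ℂ) + j)
      = Complex.ofReal ((m-1).factorial / poch a m) := by
    rw [Nat.sub_add_cancel hm, poch]
    push_cast
    ring
  rw [hr] at hb
  exact_mod_cast hb.symm

/-- the polynomial factor -/
noncomputable def Qp (x : ℝ) : ℝ := 1 + x + x^2/2 - x^4/4 - x^5/4 - x^6/8

/-- the k-th integrand -/
noncomputable def Fk (n k : ℕ) (x : ℝ) : ℝ := (x^8/16)^k * Qp x * (1-x)^(2*n-1)

lemma arith (f s p1 p2 p3 p5 p6 p7 : ℝ) (hf : f ≠ 0) (hs : s ≠ 0)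
    (h1 : p1 ≠ 0) (h2 : p2 ≠ 0) (h3 : p3 ≠ 0) (h5 : p5 ≠ 0) (h6 : p6 ≠ 0) (h7 : p7 ≠ 0) :
    (1/s) * (1/p1 + 1/p2 + 1/(2*p3) - 1/(4*p5) - 1/(4*p6) - 1/(8*p7))
    = (1/f) * (1/s * (f/p1) + 1/s * (f/p2) + 1/(2*s) * (f/p3)
        - 1/(4*s) * (f/p5) - 1/(4*s) * (f/p6) - 1/(8*s) * (f/p7)) := by
  field_simp

set_option maxHeartbeats 1000000 in
lemma term_eq_s10 (n : ℕ) (hn : 1 ≤ n) (k : ℕ) :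
    (1 / 16^k : ℝ) *
          (1 / poch (8*k + 1) (2*n) + 1 / poch (8*k + 2) (2*n)
            + 1 / (2 * poch (8*k + 3) (2*n)) - 1 / (4 * poch (8*k + 5) (2*n))
            - 1 / (4 * poch (8*k + 6) (2*n)) - 1 / (8 * poch (8*k + 7) (2*n)))
    = (1/(2*n-1).factorial) * ∫ x in (0:ℝ)..1, Fk n k x := by
  have e : ∀ j : ℕ, (∫ x in (0:ℝ)..1, x^(8*k+j) * (1-x)^(2*n-1))
      = ((2*n-1).factorial : ℝ) / poch ((8*k+j+1 : ℕ) : ℝ) (2*n) := by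
    intro j
    have := beta_nat_s10 (8*k+j+1) (2*n) (by omega) (by omega)
    simpa using this
  have ib : ∀ (c : ℝ) (p : ℕ),
      IntervalIntegrable (fun x:ℝ => c * (x^p * (1-x)^(2*n-1))) MeasureTheory.volume 0 1 := by
    intro c p
    apply Continuous.intervalIntegrable
    fun_prop
  have split : (∫ x in (0:ℝ)..1, Fk n k x)
      = ∫ x in (0:ℝ)..1,
        ((1/16^k) * (x^(8*k+0) * (1-x)^(2*n-1))
          + (1/16^k) * (x^(8*k+1) * (1-x)^(2*n-1))
          + (1/(2*16^k)) * (x^(8*k+2) * (1-x)^(2*n-1))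
          - (1/(4*16^k)) * (x^(8*k+4) * (1-x)^(2*n-1))
          - (1/(4*16^k)) * (x^(8*k+5) * (1-x)^(2*n-1))
          - (1/(8*16^k)) * (x^(8*k+6) * (1-x)^(2*n-1))) := by
    apply intervalIntegral.integral_congr
    intro x _
    unfold Fk Qp
    have h16 : (16:ℝ)^k ≠ 0 := by positivity
    rw [div_pow]
    field_simp
    ring
  have i1 := ib (1/16^k : ℝ) (8*k+0)
  have i2 := ib (1/16^k : ℝ) (8*k+1)
  have i3 := ib (1/(2*16^k) : ℝ) (8*k+2)
  have i4 := ib (1/(4*16^k) : ℝ) (8*k+4)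
  have i5 := ib (1/(4*16^k) : ℝ) (8*k+5)
  have i6 := ib (1/(8*16^k) : ℝ) (8*k+6)
  rw [split,
    intervalIntegral.integral_sub ((((i1.add i2).add i3).sub i4).sub i5) i6,
    intervalIntegral.integral_sub (((i1.add i2).add i3).sub i4) i5,
    intervalIntegral.integral_sub ((i1.add i2).add i3) i4,
    intervalIntegral.integral_add (i1.add i2) i3,
    intervalIntegral.integral_add i1 i2]
  simp only [intervalIntegral.integral_const_mul]
  rw [e 0, e 1, e 2, e 4, e 5, e 6]
  have c1 : ((8*k+0+1 : ℕ):ℝ) = 8*(k:ℝ)+1 := by push_cast; ring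
  have c2 : ((8*k+1+1 : ℕ):ℝ) = 8*(k:ℝ)+2 := by push_cast; ring
  have c3 : ((8*k+2+1 : ℕ):ℝ) = 8*(k:ℝ)+3 := by push_cast; ring
  have c5 : ((8*k+4+1 : ℕ):ℝ) = 8*(k:ℝ)+5 := by push_cast; ring
  have c6 : ((8*k+5+1 : ℕ):ℝ) = 8*(k:ℝ)+6 := by push_cast; ring
  have c7 : ((8*k+6+1 : ℕ):ℝ) = 8*(k:ℝ)+7 := by push_cast; ring
  rw [c1, c2, c3, c5, c6, c7]
  have pp : ∀ a : ℝ, 0 < a → ∀ m : ℕ, (poch a m) ≠ 0 := by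
    intro a ha m
    have : 0 < poch a m := Finset.prod_pos (fun i _ => by positivity)
    exact ne_of_gt this
  have hf : ((2*n-1).factorial : ℝ) ≠ 0 := by positivity
  have hs : (16:ℝ)^k ≠ 0 := by positivity
  exact arith _ _ _ _ _ _ _ _ hf hs
    (pp _ (by positivity) _) (pp _ (by positivity) _) (pp _ (by positivity) _)
    (pp _ (by positivity) _) (pp _ (by positivity) _) (pp _ (by positivity) _)

lemma swap_lemma (n : ℕ) (hn : 1 ≤ n) :
    ∑' k : ℕ, ∫ x in (0:ℝ)..1, Fk n k x
    = ∫ x in (0:ℝ)..1, 2*(1-x)^(2*n-1)/(x^2-2*x+2) := by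
  have hle : (0:ℝ) ≤ 1 := zero_le_one
  have cF : ∀ k, Continuous (Fk n k) := by
    intro k; unfold Fk Qp; fun_prop
  simp only [intervalIntegral.integral_of_le hle]
  have key : ∑' k : ℕ, ∫ x in Set.Ioc (0:ℝ) 1, Fk n k x
      = ∫ x in Set.Ioc (0:ℝ) 1, ∑' k : ℕ, Fk n k x := by
    apply MeasureTheory.integral_tsum_of_summable_integral_norm
    · intro k; exact (cF k).integrableOn_Ioc
    · have bound : ∀ k, (∫ x in Set.Ioc (0:ℝ) 1, ‖Fk n k x‖) ≤ 4 * (1/16:ℝ)^k := by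
        intro k
        have h : (∫ x in Set.Ioc (0:ℝ) 1, ‖Fk n k x‖)
            ≤ ∫ _x in Set.Ioc (0:ℝ) 1, (4 * (1/16:ℝ)^k) := by
          apply setIntegral_mono_on
          · exact ((cF k).norm).integrableOn_Ioc
          · exact integrableOn_const measure_Ioc_lt_top.ne
          · exact measurableSet_Ioc
          · intro x hx
            obtain ⟨hx0, hx1⟩ := hx
            have hx0' : (0:ℝ) ≤ x := le_of_lt hx0
            have h1 : (x^8/16:ℝ)^k ≤ (1/16)^k := by
              apply pow_le_pow_left₀ (by positivity)
              nlinarith [pow_le_one₀ hx0' hx1 (n := 8)]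
            have h2 : (0:ℝ) ≤ (x^8/16)^k := by positivity
            have h3 : 0 ≤ Qp x := by unfold Qp; nlinarith [pow_le_one₀ hx0' hx1 (n := 4), pow_le_one₀ hx0' hx1 (n := 5), pow_le_one₀ hx0' hx1 (n := 6), sq_nonneg x, pow_nonneg hx0' 4, pow_nonneg hx0' 5, pow_nonneg hx0' 6]
            have h4 : Qp x ≤ 4 := by unfold Qp; nlinarith [pow_le_one₀ hx0' hx1 (n := 2), pow_nonneg hx0' 4, pow_nonneg hx0' 5, pow_nonneg hx0' 6]
            have h5 : (0:ℝ) ≤ (1-x)^(2*n-1) := pow_nonneg (by linarith) _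
            have h6 : (1-x)^(2*n-1) ≤ 1 := pow_le_one₀ (by linarith) (by linarith)
            have hnn : 0 ≤ Fk n k x := by unfold Fk; exact mul_nonneg (mul_nonneg h2 h3) h5
            rw [Real.norm_of_nonneg hnn]
            unfold Fk
            calc (x^8/16)^k * Qp x * (1-x)^(2*n-1)
                ≤ ((1/16:ℝ)^k * 4) * 1 := by
                  apply mul_le_mul (mul_le_mul h1 h4 h3 (by positivity)) h6 h5 (by positivity)
              _ = 4 * (1/16:ℝ)^k := by ring
        calc (∫ x in Set.Ioc (0:ℝ) 1, ‖Fk n k x‖) ≤ _ := h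
          _ = 4 * (1/16:ℝ)^k := by
              rw [setIntegral_const]
              simp [Real.volume_Ioc]
      apply Summable.of_nonneg_of_le (fun k => integral_nonneg (fun x => norm_nonneg _)) bound
      exact (summable_geometric_of_lt_one (by norm_num) (by norm_num)).mul_left 4
  rw [key]
  apply setIntegral_congr_fun measurableSet_Ioc
  intro x hx
  obtain ⟨hx0, hx1⟩ := hx
  have hx0' : (0:ℝ) ≤ x := le_of_lt hx0
  have hr0 : (0:ℝ) ≤ x^8/16 := by positivity
  have hr1 : x^8/16 < 1 := by nlinarith [pow_le_one₀ hx0' hx1 (n := 8)]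
  have hgeo := tsum_geometric_of_lt_one hr0 hr1
  show (∑' k : ℕ, Fk n k x) = 2*(1-x)^(2*n-1)/(x^2-2*x+2)
  have : ∑' k : ℕ, Fk n k x = (∑' k : ℕ, (x^8/16)^k) * (Qp x * (1-x)^(2*n-1)) := by
    rw [← tsum_mul_right]
    congr 1; funext k; unfold Fk; ring
  rw [this, hgeo]
  have hd : (1 : ℝ) - x^8/16 ≠ 0 := by nlinarith
  have hq : x^2 - 2*x + 2 ≠ 0 := by nlinarith [sq_nonneg (x-1)]
  rw [inv_mul_eq_div, div_eq_div_iff hd hq]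
  unfold Qp
  ring

lemma subst_lemma (n : ℕ) (hn : 1 ≤ n) :
    ∫ x in (0:ℝ)..1, 2*(1-x)^(2*n-1)/(x^2-2*x+2) = ∫ t in (0:ℝ)..1, t^(n-1)/(1+t) := by
  have step1 : ∫ x in (0:ℝ)..1, 2*(1-x)^(2*n-1)/(x^2-2*x+2)
      = ∫ u in (0:ℝ)..1, 2*u^(2*n-1)/(1+u^2) := by
    have h := intervalIntegral.integral_comp_sub_left
      (fun u : ℝ => 2*u^(2*n-1)/(1+u^2)) 1 (a := 0) (b := 1)
    norm_num at h
    rw [← h]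
    apply intervalIntegral.integral_congr
    intro x _
    have hd : x^2-2*x+2 = 1+(1-x)^2 := by ring
    simp only [hd]
  have step2 : ∫ u in (0:ℝ)..1, 2*u^(2*n-1)/(1+u^2) = ∫ t in (0:ℝ)..1, t^(n-1)/(1+t) := by
    have h := intervalIntegral.integral_comp_smul_deriv'
      (f := fun u : ℝ => u^2) (f' := fun u : ℝ => 2*u) (g := fun t : ℝ => t^(n-1)/(1+t))
      (a := 0) (b := 1)
      (fun x _ => by simpa using hasDerivAt_pow 2 x)
      (by fun_prop)
      (by
        apply ContinuousOn.div
        · fun_prop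
        · fun_prop
        · rintro t ⟨u, hu, rfl⟩
          have : (0:ℝ) ≤ u^2 := sq_nonneg u
          intro h
          simp only at h
          nlinarith)
    norm_num at h
    rw [← h]
    apply intervalIntegral.integral_congr
    intro x _
    have hp : x^(2*n-1) = (x^2)^(n-1) * x := by
      rw [← pow_mul, ← pow_succ]
      congr 1
      omega
    simp only [smul_eq_mul, Function.comp]
    rw [hp]
    ring
  rw [step1, step2]

lemma int_ii (m : ℕ) : IntervalIntegrable (fun t:ℝ => (-t)^m/(1+t)) volume 0 1 := by
  apply ContinuousOn.intervalIntegrable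
  apply ContinuousOn.div (by fun_prop) (by fun_prop)
  intro t ht
  rw [Set.uIcc_of_le zero_le_one] at ht
  have := ht.1
  intro h
  linarith

lemma lhs_lemma (n : ℕ) (hn : 1 ≤ n) :
    Filter.Tendsto (fun N => ∑ k ∈ Finset.Ico n N, (-1:ℝ)^(k-1) / k)
      Filter.atTop (nhds ((-1)^(n-1) * ∫ t in (0:ℝ)..1, t^(n-1)/(1+t))) := by
  set T : ℝ := (-1)^(n-1) * ∫ t in (0:ℝ)..1, t^(n-1)/(1+t) with hT
  -- partial sum formula
  have hform : ∀ N, n ≤ N → (∑ k ∈ Finset.Ico n N, (-1:ℝ)^(k-1) / k)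
      = T - ∫ t in (0:ℝ)..1, (-t)^(N-1)/(1+t) := by
    intro N hN
    have hsum : (∑ k ∈ Finset.Ico n N, (-1:ℝ)^(k-1) / k)
        = ∫ t in (0:ℝ)..1, ∑ k ∈ Finset.Ico n N, (-t)^(k-1) := by
      rw [intervalIntegral.integral_finset_sum
        (fun k _ => ((by fun_prop : Continuous fun t:ℝ => (-t)^(k-1)).intervalIntegrable 0 1))]
      apply Finset.sum_congr rfl
      intro k hk
      have hk1 : 1 ≤ k := le_trans hn (Finset.mem_Ico.mp hk).1
      have h1 : (∫ t in (0:ℝ)..1, (-t)^(k-1)) = ∫ t in (0:ℝ)..1, (-1:ℝ)^(k-1) * t^(k-1) := by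
        apply intervalIntegral.integral_congr
        intro t _
        show (-t)^(k-1) = (-1:ℝ)^(k-1) * t^(k-1)
        rw [neg_pow]
      rw [h1, intervalIntegral.integral_const_mul, integral_pow]
      have : ((k-1:ℕ):ℝ) + 1 = (k:ℝ) := by
        push_cast [Nat.cast_sub hk1]; ring
      rw [this]
      norm_num
      ring
    rw [hsum]
    have hinner : ∀ t ∈ Set.uIcc (0:ℝ) 1, (∑ k ∈ Finset.Ico n N, (-t)^(k-1))
        = ((-t)^(n-1) - (-t)^(N-1))/(1+t) := by
      intro t ht
      rw [Set.uIcc_of_le zero_le_one] at ht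
      have ht0 : (0:ℝ) ≤ t := ht.1
      have h1t : (1:ℝ) + t ≠ 0 := by linarith
      have hne : (-t : ℝ) ≠ 1 := by intro h; linarith
      rw [Finset.sum_Ico_eq_sum_range]
      have hsh : ∀ i ∈ Finset.range (N-n), (-t)^(n+i-1) = (-t)^(n-1) * (-t)^i := by
        intro i _
        rw [← pow_add]
        congr 1
        omega
      rw [Finset.sum_congr rfl hsh, ← Finset.mul_sum, geom_sum_eq hne (N-n)]
      have hpow : (-t)^(n-1) * (-t)^(N-n) = (-t)^(N-1) := by
        rw [← pow_add]; congr 1; omega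
      have hne2 : (-t) - 1 ≠ 0 := by intro h; linarith
      field_simp
      linear_combination (1+t) * hpow
    rw [intervalIntegral.integral_congr hinner]
    have hsplit : ∀ t : ℝ, ((-t)^(n-1) - (-t)^(N-1))/(1+t)
        = (-t)^(n-1)/(1+t) - (-t)^(N-1)/(1+t) := fun t => by ring
    simp_rw [hsplit]
    rw [intervalIntegral.integral_sub (int_ii (n-1)) (int_ii (N-1))]
    congr 1
    rw [hT]
    rw [← intervalIntegral.integral_const_mul]
    apply intervalIntegral.integral_congr
    intro t _
    rw [neg_pow]
    ring
  rw [← tendsto_sub_nhds_zero_iff]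
  apply squeeze_zero_norm' (a := fun N : ℕ => 1/(N:ℝ))
  · filter_upwards [eventually_ge_atTop n, eventually_ge_atTop 1] with N hN hN1
    rw [hform N hN]
    have : T - (∫ t in (0:ℝ)..1, (-t)^(N-1)/(1+t)) - T
        = -(∫ t in (0:ℝ)..1, (-t)^(N-1)/(1+t)) := by ring
    rw [this, norm_neg]
    calc ‖∫ t in (0:ℝ)..1, (-t)^(N-1)/(1+t)‖
        ≤ ∫ t in (0:ℝ)..1, ‖(-t)^(N-1)/(1+t)‖ :=
          intervalIntegral.norm_integral_le_integral_norm zero_le_one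
      _ ≤ ∫ t in (0:ℝ)..1, t^(N-1) := by
          apply intervalIntegral.integral_mono_on zero_le_one (int_ii (N-1)).norm
            ((continuous_pow _).intervalIntegrable 0 1)
          intro t ht
          have ht0 : (0:ℝ) ≤ t := ht.1
          have ht1 : t ≤ 1 := ht.2
          rw [Real.norm_eq_abs, abs_div, abs_pow, abs_neg, abs_of_nonneg ht0,
            abs_of_nonneg (by linarith : (0:ℝ) ≤ 1+t)]
          exact div_le_self (pow_nonneg ht0 _) (by linarith)
      _ = 1/(N:ℝ) := by
          rw [integral_pow]
          have : ((N-1:ℕ):ℝ) + 1 = (N:ℝ) := by push_cast [Nat.cast_sub hN1]; ring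
          rw [this]
          norm_num
  · exact tendsto_one_div_atTop_nhds_zero_nat

theorem stmt_10 (n : ℕ) (hn : 1 ≤ n) :
    Filter.Tendsto (fun N => ∑ k ∈ Finset.Ico n N, (-1:ℝ)^(k-1) / k)
      Filter.atTop
      (nhds ((-1)^(n-1) * (Nat.factorial (2*n - 1) : ℝ) * ∑' k : ℕ, (1 / 16^k) *
          (1 / poch (8*k + 1) (2*n) + 1 / poch (8*k + 2) (2*n)
            + 1 / (2 * poch (8*k + 3) (2*n)) - 1 / (4 * poch (8*k + 5) (2*n))
            - 1 / (4 * poch (8*k + 6) (2*n)) - 1 / (8 * poch (8*k + 7) (2*n))))) := by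
  have hval : ((-1:ℝ))^(n-1) * (Nat.factorial (2*n - 1) : ℝ) * (∑' k : ℕ, (1 / 16^k : ℝ) *
          (1 / poch (8*k + 1) (2*n) + 1 / poch (8*k + 2) (2*n)
            + 1 / (2 * poch (8*k + 3) (2*n)) - 1 / (4 * poch (8*k + 5) (2*n))
            - 1 / (4 * poch (8*k + 6) (2*n)) - 1 / (8 * poch (8*k + 7) (2*n))))
      = (-1:ℝ)^(n-1) * ∫ t in (0:ℝ)..1, t^(n-1)/(1+t) := by
    have hts : (∑' k : ℕ, (1 / 16^k : ℝ) *
          (1 / poch (8*k + 1) (2*n) + 1 / poch (8*k + 2) (2*n)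
            + 1 / (2 * poch (8*k + 3) (2*n)) - 1 / (4 * poch (8*k + 5) (2*n))
            - 1 / (4 * poch (8*k + 6) (2*n)) - 1 / (8 * poch (8*k + 7) (2*n))))
        = (1/((2*n-1).factorial : ℝ)) * ∑' k : ℕ, ∫ x in (0:ℝ)..1, Fk n k x := by
      rw [← tsum_mul_left]
      exact tsum_congr (fun k => term_eq_s10 n hn k)
    rw [hts, swap_lemma n hn, subst_lemma n hn]
    have hf : ((2*n-1).factorial : ℝ) ≠ 0 := by positivity
    field_simp
  rw [hval]
  exact lhs_lemma n hn
end

section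
/- For every natural number n ≥ 1, 4(π/4 - Σ_{m=0}^{n-1} (-1)^m/(2m+1)) = (-1)ⁿ (ψ((2n+3)/4) - ψ((2n+1)/4)), where ψ is the digamma function. -/
/-- The digamma function ψ = Γ'/Γ on the reals. -/
noncomputable def digamma (x : ℝ) : ℝ := deriv Real.Gamma x / Real.Gamma x

lemma diffGamma {x : ℝ} (hx : 0 < x) : DifferentiableAt ℝ Real.Gamma x :=
  Real.differentiableAt_Gamma (fun m => by
    have : (0:ℝ) ≤ m := Nat.cast_nonneg m
    intro h; rw [h] at hx; linarith)

lemma digamma_add_one {x : ℝ} (hx : 0 < x) : digamma (x + 1) = digamma x + 1 / x := by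
  have h1 : HasDerivAt (fun y : ℝ => Real.Gamma (y + 1)) (deriv Real.Gamma (x + 1)) x := by
    exact (diffGamma (by linarith : (0:ℝ) < x + 1)).hasDerivAt.comp_add_const x 1
  have h2 : HasDerivAt (fun y : ℝ => y * Real.Gamma y)
      (1 * Real.Gamma x + x * deriv Real.Gamma x) x :=
    (hasDerivAt_id x).mul (diffGamma hx).hasDerivAt
  have heq : (fun y : ℝ => Real.Gamma (y + 1)) =ᶠ[nhds x] fun y => y * Real.Gamma y := by
    filter_upwards [eventually_gt_nhds hx] with y hy
    exact Real.Gamma_add_one hy.ne'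
  have h3 := (h2.congr_of_eventuallyEq heq).unique h1
  have hΓ : Real.Gamma x ≠ 0 := (Real.Gamma_pos_of_pos hx).ne'
  have hΓ1 : Real.Gamma (x + 1) = x * Real.Gamma x := Real.Gamma_add_one hx.ne'
  rw [digamma, digamma, ← h3, hΓ1]
  field_simp
  ring

lemma reflect : digamma (3/4) - digamma (1/4) = Real.pi := by
  set a := Real.Gamma (1/4) with ha
  set b := Real.Gamma (3/4) with hb
  set ga := deriv Real.Gamma (1/4) with hga
  set gb := deriv Real.Gamma (3/4) with hgb
  have hF : HasDerivAt (fun x : ℝ => Real.Gamma x * Real.Gamma (1 - x))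
      (ga * b + a * (gb * (-1))) (1/4) := by
    have h1 : HasDerivAt Real.Gamma ga (1/4 : ℝ) := (diffGamma (by norm_num)).hasDerivAt
    have h2 : HasDerivAt (fun x : ℝ => Real.Gamma (1 - x)) (gb * (-1)) (1/4 : ℝ) := by
      have : HasDerivAt (fun x : ℝ => 1 - x) (-1) (1/4 : ℝ) := by
        simpa using (hasDerivAt_id (1/4:ℝ)).const_sub 1
      have h3 : HasDerivAt Real.Gamma gb ((fun x : ℝ => 1 - x) (1/4)) := by
        norm_num
        exact (diffGamma (by norm_num)).hasDerivAt
      exact h3.comp _ this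
    have := h1.fun_mul h2
    exact this.congr_deriv (by norm_num [ha, hb])
  have hG : HasDerivAt (fun x : ℝ => Real.pi / Real.sin (Real.pi * x))
      (-(Real.pi * (Real.pi * Real.cos (Real.pi * (1/4)))) /
        (Real.sin (Real.pi * (1/4)))^2) (1/4) := by
    have hs : HasDerivAt (fun x : ℝ => Real.sin (Real.pi * x))
        (Real.cos (Real.pi * (1/4)) * Real.pi) (1/4 : ℝ) :=
      by
      have hlin : HasDerivAt (fun x : ℝ => Real.pi * x) Real.pi (1/4 : ℝ) := by
        simpa using (hasDerivAt_id (1/4:ℝ)).const_mul Real.pi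
      exact (Real.hasDerivAt_sin _).comp _ hlin
    have hsne : Real.sin (Real.pi * (1/4)) ≠ 0 := by
      rw [mul_one_div, Real.sin_pi_div_four]; positivity
    have := (hasDerivAt_const (1/4:ℝ) Real.pi).div hs hsne
    exact this.congr_deriv (by ring)
  have hFG : (fun x : ℝ => Real.Gamma x * Real.Gamma (1 - x))
      = fun x : ℝ => Real.pi / Real.sin (Real.pi * x) := by
    funext x; exact Real.Gamma_mul_Gamma_one_sub x
  rw [hFG] at hF
  have key := hF.unique hG
  have hsin : Real.sin (Real.pi * (1/4)) = Real.sqrt 2 / 2 := by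
    rw [mul_one_div, Real.sin_pi_div_four]
  have hcos : Real.cos (Real.pi * (1/4)) = Real.sqrt 2 / 2 := by
    rw [mul_one_div, Real.cos_pi_div_four]
  have hs2sq' : Real.sqrt 2 * Real.sqrt 2 = 2 := Real.mul_self_sqrt (by norm_num)
  have hab : a * b = Real.pi * Real.sqrt 2 := by
    have h : a * b = Real.pi / (Real.sqrt 2 / 2) := by
      rw [ha, hb, show (3/4:ℝ) = 1 - 1/4 by norm_num, Real.Gamma_mul_Gamma_one_sub,
        mul_one_div, Real.sin_pi_div_four]
    rw [h, div_div_eq_mul_div, div_eq_iff (by positivity : (Real.sqrt 2 : ℝ) ≠ 0)]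
    linear_combination (-Real.pi) * hs2sq'
  rw [hsin, hcos] at key
  have hs2 : Real.sqrt 2 > 0 := by positivity
  have hs2sq : Real.sqrt 2 * Real.sqrt 2 = 2 := Real.mul_self_sqrt (by norm_num)
  have key2 : ga * b - a * gb = -(Real.pi^2 * Real.sqrt 2) := by
    have h : (Real.sqrt 2 / 2)^2 = 1/2 := by
      rw [div_pow, sq, hs2sq]; norm_num
    rw [h] at key
    field_simp at key
    nlinarith [key]
  have hapos : 0 < a := Real.Gamma_pos_of_pos (by norm_num)
  have hbpos : 0 < b := Real.Gamma_pos_of_pos (by norm_num)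
  have hpi : 0 < Real.pi := Real.pi_pos
  rw [digamma, digamma, ← hgb, ← hga, ← ha, ← hb]
  rw [div_sub_div _ _ hbpos.ne' hapos.ne', div_eq_iff (by positivity)]
  nlinarith [key2, hab]

theorem stmt_12 (n : ℕ) (hn : 1 ≤ n) :
    4 * (Real.pi/4 - ∑ m ∈ Finset.range n, (-1:ℝ)^m / (2*m + 1))
      = (-1)^n * (digamma ((2*n + 3)/4) - digamma ((2*n + 1)/4)) := by
  induction n with
  | zero => omega
  | succ k ih =>
    rcases Nat.eq_or_lt_of_le hn with h1 | h1
    · -- k = 0, n = 1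
      have hk : k = 0 := by omega
      subst hk
      have h54 : digamma ((2*((1:ℕ):ℝ) + 3)/4 : ℝ) = digamma (1/4) + 4 := by
        have h := digamma_add_one (x := (1/4 : ℝ)) (by norm_num)
        norm_num at h ⊢
        exact h
      push_cast
      push_cast at h54
      rw [h54, Finset.sum_range_one]
      norm_num
      linarith [reflect]
    · have hk : 1 ≤ k := by omega
      have hrec : digamma ((2*(k+1:ℕ) + 3)/4 : ℝ)
          = digamma ((2*(k:ℕ) + 1)/4 : ℝ) + 4/(2*k+1) := by
        have hx : (0:ℝ) < (2*(k:ℕ) + 1)/4 := by positivity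
        have := digamma_add_one hx
        have he : ((2*((k:ℝ)+1) + 3)/4 : ℝ) = (2*(k:ℝ) + 1)/4 + 1 := by ring
        push_cast
        rw [he, this]
        congr 1
        rw [one_div, eq_div_iff (by positivity)]
        field_simp
      rw [Finset.sum_range_succ]
      have he2 : ((2*((k:ℝ)+1) + 1)/4 : ℝ) = (2*(k:ℝ) + 3)/4 := by ring
      push_cast
      push_cast at hrec
      rw [hrec, he2]
      have ihk := ih hk
      push_cast at ihk
      linear_combination ihk
end
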